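/- arXiv:2105.04146 — 2 statements merged into one kernel-verified Lean document; each statement's English description precedes it below -/
import Mathlib

section
/- If M₁ and M₂ are distinct maximal matchings of a simple graph G and the symmetric difference graph G[M₁ △ M₂] contains a path component P with an even number of edges (exactly one endpoint of P unmatched in M₁), then letting e₁ be the edge of P ∩ M₂ at the M₁-unmatched endpoint and e₂ the adjacent edge of P ∩ M₁, the set M̂ = (M₁ \ {e₂}) ∪ {e₁} is a matching of G with |M̂| = |M₁| and |M̂ ∩ M₂| > |M₁ ∩ M₂|. -/
open SimpleGraph

variable {V : Type*}

def IsMatchingF (G : SimpleGraph V) (M : Finset (Sym2 V)) : Prop :=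
  (∀ e ∈ M, e ∈ G.edgeSet) ∧
    ∀ e ∈ M, ∀ f ∈ M, e ≠ f → ∀ v : V, v ∈ e → v ∉ f

def IsMaximalMatchingF [DecidableEq V] (G : SimpleGraph V) (M : Finset (Sym2 V)) : Prop :=
  IsMatchingF G M ∧ ∀ e ∈ G.edgeSet, e ∉ M → ¬ IsMatchingF G (insert e M)

/-- `v` is unmatched by the matching `M`. -/
def Unmatched (M : Finset (Sym2 V)) (v : V) : Prop := ∀ e ∈ M, v ∉ e

/-- The graph `G[M₁ △ M₂]` on the symmetric difference of two edge sets. -/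
def sdGraph [DecidableEq V] (M₁ M₂ : Finset (Sym2 V)) : SimpleGraph V where
  Adj v w := v ≠ w ∧ s(v, w) ∈ (M₁ \ M₂) ∪ (M₂ \ M₁)
  symm := ⟨by
    intro v w h
    exact ⟨h.1.symm, by rw [Sym2.eq_swap]; exact h.2⟩⟩
  loopless := ⟨fun v h => h.1 rfl⟩

/-- The walk `p` is a path which is exactly a connected component of `H`
(it spans the component and uses all of its edges, and has at least one edge). -/
def IsPathComponent [DecidableEq V] (H : SimpleGraph V) {u w : V} (p : H.Walk u w) : Prop :=
  p.IsPath ∧ 1 ≤ p.length ∧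
    (∀ x : V, x ∈ p.support ↔ H.connectedComponentMk x = H.connectedComponentMk u) ∧
    (∀ a b : V, H.Adj a b → a ∈ p.support → s(a, b) ∈ p.edges)

/-- The closed walk `p` is a cycle which is exactly a connected component of `H`. -/
def IsCycleComponent [DecidableEq V] (H : SimpleGraph V) {u : V} (p : H.Walk u u) : Prop :=
  p.IsCycle ∧
    (∀ x : V, x ∈ p.support ↔ H.connectedComponentMk x = H.connectedComponentMk u) ∧
    (∀ a b : V, H.Adj a b → a ∈ p.support → s(a, b) ∈ p.edges)

/-!
Since `u` is unmatched in `M₁` and the other endpoint `v` of `e₁` lies on `e₂ ∈ M₁`, removing `e₂`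
frees both endpoints of `e₁`, so `e₁` can take its place. The swap keeps the size of `M₁`, loses
`e₂ ∉ M₂` (it is an edge of `G[M₁ △ M₂]`) and gains `e₁ ∈ M₂`.
-/

namespace Finset

variable {α : Type*} [DecidableEq α] {s t : Finset α} {a b : α}

lemma card_insert_erase_of_notMem (hb : b ∈ s) (ha : a ∉ s) :
    (insert a (s.erase b)).card = s.card := by
  rw [card_insert_of_notMem (fun h => ha (mem_of_mem_erase h)), card_erase_add_one hb]

lemma card_insert_erase_inter_of_mem (has : a ∉ s) (hat : a ∈ t) (hbt : b ∉ t) :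
    (insert a (s.erase b) ∩ t).card = (s ∩ t).card + 1 := by
  rw [insert_inter_of_mem hat, erase_inter, erase_eq_of_notMem (fun h => hbt (mem_inter.mp h).2),
    card_insert_of_notMem (fun h => has (mem_inter.mp h).1)]

end Finset

section

variable {G : SimpleGraph V} {M N : Finset (Sym2 V)} {e f : Sym2 V}

lemma notMem_of_mem_edgeSet_sdGraph [DecidableEq V] (he : e ∈ (sdGraph M N).edgeSet)
    (heM : e ∈ M) : e ∉ N := by
  induction e using Sym2.ind with
  | _ a b =>
    rcases Finset.mem_union.mp he.2 with h | h
    · exact (Finset.mem_sdiff.mp h).2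
    · exact absurd heM (Finset.mem_sdiff.mp h).2

lemma IsMatchingF.mono (hM : IsMatchingF G M) (hNM : N ⊆ M) : IsMatchingF G N :=
  ⟨fun e he => hM.1 e (hNM he), fun e he f hf => hM.2 e (hNM he) f (hNM hf)⟩

lemma IsMatchingF.insert_of_disjoint [DecidableEq V] (hM : IsMatchingF G M)
    (he : e ∈ G.edgeSet) (hdisj : ∀ f ∈ M, ∀ x ∈ e, x ∉ f) : IsMatchingF G (insert e M) := by
  refine ⟨fun f hf => ?_, fun f hf g hg hfg x hxf => ?_⟩
  · rcases Finset.mem_insert.mp hf with hfe | hf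
    exacts [hfe ▸ he, hM.1 f hf]
  · rcases Finset.mem_insert.mp hf with hfe | hf <;> rcases Finset.mem_insert.mp hg with hge | hg
    · exact absurd (hfe.trans hge.symm) hfg
    · exact hdisj g hg x (hfe ▸ hxf)
    · exact fun hxg => hdisj f hf x (hge ▸ hxg) hxf
    · exact hM.2 f hf g hg hfg x hxf

lemma IsMatchingF.insert_erase_of_unmatched [DecidableEq V] (hM : IsMatchingF G M)
    (hfM : f ∈ M) (he : e ∈ G.edgeSet) {u v : V} (hu : Unmatched M u) (hue : u ∈ e) (hve : v ∈ e)
    (hvf : v ∈ f) : IsMatchingF G (insert e (M.erase f)) := by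
  have huv : u ≠ v := fun h => hu f hfM (h ▸ hvf)
  have he_eq : e = s(u, v) := (Sym2.mem_and_mem_iff huv).mp ⟨hue, hve⟩
  refine (hM.mono (Finset.erase_subset f M)).insert_of_disjoint he fun g hg x hx => ?_
  have hgM := Finset.mem_of_mem_erase hg
  rcases Sym2.mem_iff.mp (he_eq ▸ hx) with rfl | rfl
  · exact hu g hgM
  · exact hM.2 f hfM g hgM (Finset.ne_of_mem_erase hg).symm x hvf

end

theorem stmt3_general [DecidableEq V] (G : SimpleGraph V) (M₁ M₂ : Finset (Sym2 V))
    (h₁ : IsMaximalMatchingF G M₁) (h₂ : IsMaximalMatchingF G M₂)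
    (u w : V) (p : (sdGraph M₁ M₂).Walk u w)
    (hu : Unmatched M₁ u)
    (e₁ e₂ : Sym2 V)
    (he₁ : e₁ ∈ p.edges ∧ e₁ ∈ M₂ ∧ u ∈ e₁)
    (he₂ : e₂ ∈ p.edges ∧ e₂ ∈ M₁ ∧ e₁ ≠ e₂ ∧ ∃ v : V, v ∈ e₁ ∧ v ∈ e₂) :
    IsMatchingF G (insert e₁ (M₁.erase e₂)) ∧
      (insert e₁ (M₁.erase e₂)).card = M₁.card ∧
      (M₁ ∩ M₂).card < (insert e₁ (M₁.erase e₂) ∩ M₂).card := by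
  obtain ⟨-, he₁M₂, hue₁⟩ := he₁
  obtain ⟨he₂p, he₂M₁, -, v, hve₁, hve₂⟩ := he₂
  have he₁M₁ : e₁ ∉ M₁ := fun h => hu e₁ h hue₁
  have he₂M₂ : e₂ ∉ M₂ :=
    notMem_of_mem_edgeSet_sdGraph (p.edges_subset_edgeSet he₂p) he₂M₁
  refine ⟨IsMatchingF.insert_erase_of_unmatched h₁.1 he₂M₁ (h₂.1.1 e₁ he₁M₂) hu hue₁ hve₁ hve₂,
    Finset.card_insert_erase_of_notMem he₂M₁ he₁M₁, ?_⟩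
  rw [Finset.card_insert_erase_inter_of_mem he₁M₁ he₁M₂ he₂M₂]
  exact Nat.lt_add_one _

theorem stmt3 [DecidableEq V] (G : SimpleGraph V) (M₁ M₂ : Finset (Sym2 V))
    (h₁ : IsMaximalMatchingF G M₁) (h₂ : IsMaximalMatchingF G M₂) (hne : M₁ ≠ M₂)
    (u w : V) (p : (sdGraph M₁ M₂).Walk u w)
    (hp : IsPathComponent (sdGraph M₁ M₂) p) (heven : Even p.length)
    (hu : Unmatched M₁ u) (hw : ¬ Unmatched M₁ w)
    (e₁ e₂ : Sym2 V)
    (he₁ : e₁ ∈ p.edges ∧ e₁ ∈ M₂ ∧ u ∈ e₁)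
    (he₂ : e₂ ∈ p.edges ∧ e₂ ∈ M₁ ∧ e₁ ≠ e₂ ∧ ∃ v : V, v ∈ e₁ ∧ v ∈ e₂) :
    IsMatchingF G (insert e₁ (M₁.erase e₂)) ∧
      (insert e₁ (M₁.erase e₂)).card = M₁.card ∧
      (M₁ ∩ M₂).card < (insert e₁ (M₁.erase e₂) ∩ M₂).card :=
  stmt3_general G M₁ M₂ h₁ h₂ u w p hu e₁ e₂ he₁ he₂
end

section
/- Define a directed graph 𝒢 whose nodes are the maximal matchings of a simple graph G, with an arc from M to M' whenever M' = complete((M \ Γ(e)) ∪ {e}) for some edge e ∉ M, where complete extends a matching greedily to a maximal matching. Then 𝒢 is strongly connected. -/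
open SimpleGraph

variable {V : Type*}

/-- `M` minus all edges sharing an endpoint with `e` (i.e. `M \ Γ(e)` for `e ∉ M`). -/
def removeAdj [Fintype V] [DecidableEq V] (M : Finset (Sym2 V)) (e : Sym2 V) :
    Finset (Sym2 V) :=
  M.filter fun f => ¬ ∃ v : V, v ∈ e ∧ v ∈ f

/-- `comp` greedily extends any matching of `G` to a maximal matching containing it. -/
def CompletionFun [DecidableEq V] (G : SimpleGraph V)
    (comp : Finset (Sym2 V) → Finset (Sym2 V)) : Prop :=
  ∀ M : Finset (Sym2 V), IsMatchingF G M → M ⊆ comp M ∧ IsMaximalMatchingF G (comp M)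

/-- The arcs of the solution graph 𝒢: from `M` to `comp((M \ Γ(e)) ∪ {e})` for `e ∉ M`. -/
def GStep [Fintype V] [DecidableEq V] (G : SimpleGraph V)
    (comp : Finset (Sym2 V) → Finset (Sym2 V)) (M M' : Finset (Sym2 V)) : Prop :=
  ∃ e ∈ G.edgeSet, e ∉ M ∧ M' = comp (insert e (removeAdj M e))

/-!
Fix a target maximal matching `M₂`. From any maximal matching `N ≠ M₂` pick an edge
`e ∈ M₂ \ N` and take the arc along `e`. The edges removed from `N` all meet `e`, so none of
them lies in the matching `M₂`; hence the new matching contains `e` together with every edge of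
`M₂ ∩ N`, and `#(M₂ \ N)` strictly drops. When it reaches `0` we have `M₂ ⊆ N`, which forces
`N = M₂` by maximality of `M₂`.
-/

section

variable {G : SimpleGraph V} {M N : Finset (Sym2 V)} {e : Sym2 V}

theorem IsMatchingF.subset (hN : IsMatchingF G N) (hMN : M ⊆ N) : IsMatchingF G M :=
  ⟨fun f hf => hN.1 f (hMN hf), fun f hf f' hf' => hN.2 f (hMN hf) f' (hMN hf')⟩

theorem IsMaximalMatchingF.eq_of_subset [DecidableEq V] (hM : IsMaximalMatchingF G M)
    (hN : IsMatchingF G N) (hMN : M ⊆ N) : N = M := by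
  refine hMN.antisymm' fun f hf => ?_
  by_contra hfM
  exact hM.2 f (hN.1 f hf) hfM (hN.subset (Finset.insert_subset hf hMN))

variable [Fintype V] [DecidableEq V]

theorem mem_removeAdj {f : Sym2 V} :
    f ∈ removeAdj N e ↔ f ∈ N ∧ ¬ ∃ v : V, v ∈ e ∧ v ∈ f :=
  Finset.mem_filter

theorem IsMatchingF.insert_removeAdj (hN : IsMatchingF G N) (he : e ∈ G.edgeSet) :
    IsMatchingF G (insert e (removeAdj N e)) := by
  refine ⟨fun f hf => ?_, fun f hf f' hf' hff' v hvf => ?_⟩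
  · rcases Finset.mem_insert.mp hf with rfl | hf
    · exact he
    · exact hN.1 f (mem_removeAdj.mp hf).1
  rcases Finset.mem_insert.mp hf with rfl | hf <;>
    rcases Finset.mem_insert.mp hf' with rfl | hf'
  · exact absurd rfl hff'
  · exact fun hvf' => (mem_removeAdj.mp hf').2 ⟨v, hvf, hvf'⟩
  · exact fun hvf' => (mem_removeAdj.mp hf).2 ⟨v, hvf', hvf⟩
  · exact hN.2 f (mem_removeAdj.mp hf).1 f' (mem_removeAdj.mp hf').1 hff' v hvf

theorem IsMatchingF.inter_insert_subset_insert_removeAdj (hM : IsMatchingF G M) (he : e ∈ M) :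
    M ∩ insert e N ⊆ insert e (removeAdj N e) := by
  intro f hf
  obtain ⟨hfM, hfN⟩ := Finset.mem_inter.mp hf
  rcases Finset.mem_insert.mp hfN with rfl | hfN
  · exact Finset.mem_insert_self f _
  by_cases hfe : f = e
  · exact hfe ▸ Finset.mem_insert_self f _
  refine Finset.mem_insert_of_mem (mem_removeAdj.mpr ⟨hfN, ?_⟩)
  rintro ⟨v, hve, hvf⟩
  exact hM.2 e he f hfM (Ne.symm hfe) v hve hvf

theorem exists_gStep_card_sdiff_lt {comp : Finset (Sym2 V) → Finset (Sym2 V)}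
    (hcomp : CompletionFun G comp) (hN : IsMatchingF G N) (hM : IsMatchingF G M)
    (hMN : ¬ M ⊆ N) :
    ∃ N', GStep G comp N N' ∧ IsMaximalMatchingF G N' ∧ (M \ N').card < (M \ N).card := by
  obtain ⟨e, heM, heN⟩ := Finset.not_subset.mp hMN
  have heG : e ∈ G.edgeSet := hM.1 e heM
  obtain ⟨hsub, hmax⟩ := hcomp _ (hN.insert_removeAdj heG)
  have hsdiff : M \ comp (insert e (removeAdj N e)) ⊆ (M \ N).erase e := by
    rw [← Finset.sdiff_insert, ← Finset.sdiff_inter_self_left M (insert e N)]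
    exact Finset.sdiff_subset_sdiff subset_rfl
      ((hM.inter_insert_subset_insert_removeAdj heM).trans hsub)
  refine ⟨_, ⟨e, heG, heN, rfl⟩, hmax, ?_⟩
  exact (Finset.card_le_card hsdiff).trans_lt
    (Finset.card_erase_lt_of_mem (Finset.mem_sdiff.mpr ⟨heM, heN⟩))

end

theorem stmt8 [Fintype V] [DecidableEq V] (G : SimpleGraph V)
    (comp : Finset (Sym2 V) → Finset (Sym2 V)) (hcomp : CompletionFun G comp)
    (M₁ M₂ : Finset (Sym2 V))
    (h₁ : IsMaximalMatchingF G M₁) (h₂ : IsMaximalMatchingF G M₂) :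
    Relation.ReflTransGen (GStep G comp) M₁ M₂ := by
  induction hn : (M₂ \ M₁).card using Nat.strong_induction_on generalizing M₁ with
  | _ n ih =>
    by_cases hsub : M₂ ⊆ M₁
    · rw [h₂.eq_of_subset h₁.1 hsub]
    · obtain ⟨N, hstep, hN, hlt⟩ := exists_gStep_card_sdiff_lt hcomp h₁.1 h₂.1 hsub
      exact .head hstep (ih _ (hn ▸ hlt) N hN rfl)
end
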